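/- arXiv:2008.06645 — 13 statements merged into one kernel-verified Lean document; each statement's English description precedes it below -/
import Mathlib

section
/- Let (A, ·, α) be a Hom-associative algebra and (V, β) a Hom-module, with linear maps l, r: A → gl(V). Then l, r satisfy the Hom-bimodule conditions l(x·y)β(v) = l(α(x))l(y)v, r(x·y)β(v) = r(α(y))r(x)v, and l(α(x))r(y)v = r(α(y))l(x)v for all x,y ∈ A, v ∈ V, if and only if the direct sum A ⊕ V becomes a Hom-associative algebra with product (x₁+v₁)∗(x₂+v₂) = x₁·x₂ + l(x₁)v₂ + r(x₂)v₁ and twisting map α⊕β. -/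
/-- Hom-associativity of a product `mul` with twisting map `α`. -/
def IsHomAssoc {X : Type*} (mul : X → X → X) (α : X → X) : Prop :=
  ∀ x y z, mul (α x) (mul y z) = mul (mul x y) (α z)

/-- the three Hom-bimodule equations hold iff the direct sum
`A ⊕ V` with product `(x₁+v₁)∗(x₂+v₂) = x₁·x₂ + l(x₁)v₂ + r(x₂)v₁` and
twisting map `α ⊕ β` is a Hom-associative algebra. -/
theorem stmt0 {K A V : Type*} [Field K] [AddCommGroup A] [Module K A]
    [AddCommGroup V] [Module K V]
    (mul : A →ₗ[K] A →ₗ[K] A) (α : A →ₗ[K] A)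
    (hA : IsHomAssoc (fun x y => mul x y) (fun x => α x))
    (l r : A →ₗ[K] Module.End K V) (β : V →ₗ[K] V) :
    ((∀ (x y : A) (v : V), l (mul x y) (β v) = l (α x) (l y v)) ∧
     (∀ (x y : A) (v : V), r (mul x y) (β v) = r (α y) (r x v)) ∧
     (∀ (x y : A) (v : V), l (α x) (r y v) = r (α y) (l x v))) ↔
    IsHomAssoc
      (fun p q : A × V => (mul p.1 q.1, l p.1 q.2 + r q.1 p.2))
      (fun p : A × V => (α p.1, β p.2)) := by
  constructor
  · rintro ⟨h1, h2, h3⟩ p q s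
    refine Prod.ext (hA p.1 q.1 s.1) ?_
    simp only [map_add, LinearMap.add_apply]
    rw [h1 p.1 q.1 s.2, h2 q.1 s.1 p.2, h3 p.1 s.1 q.2]
    abel
  · intro h
    refine ⟨fun x y v => ?_, fun x y v => ?_, fun x y v => ?_⟩
    · have := congrArg Prod.snd (h (x, 0) (y, 0) (0, v))
      simpa using this.symm
    · have := congrArg Prod.snd (h (0, v) (x, 0) (y, 0))
      simpa using this
    · have := congrArg Prod.snd (h (x, 0) (0, v) (y, 0))
      simpa using this
end

section
/- Let (l, r, β, V) be a bimodule of a multiplicative Hom-associative algebra (A, ·, α). Then for any nonnegative integer n, the quadruple (l∘αⁿ, r∘αⁿ, β, V) is also a bimodule of A. -/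
/-- Bimodule of a Hom-associative algebra. -/
def IsHomBimodule {X W : Type*} (mul : X → X → X) (α : X → X)
    (l r : X → W → W) (β : W → W) : Prop :=
  (∀ x y v, l (mul x y) (β v) = l (α x) (l y v)) ∧
  (∀ x y v, r (mul x y) (β v) = r (α y) (r x v)) ∧
  (∀ x y v, l (α x) (r y v) = r (α y) (l x v)) ∧
  (∀ x v, β (l x v) = l (α x) (β v)) ∧
  (∀ x v, β (r x v) = r (α x) (β v))

/-- if `(l, r, β, V)` is a bimodule of a multiplicative
Hom-associative algebra `(A, ·, α)`, then so is `(l∘αⁿ, r∘αⁿ, β, V)`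
for every nonnegative integer `n`. -/
theorem stmt1 {K A V : Type*} [Field K] [AddCommGroup A] [Module K A]
    [AddCommGroup V] [Module K V]
    (mul : A →ₗ[K] A →ₗ[K] A) (α : Module.End K A)
    (hassoc : IsHomAssoc (fun x y => mul x y) (fun x => α x))
    (hmult : ∀ x y, α (mul x y) = mul (α x) (α y))
    (l r : A →ₗ[K] Module.End K V) (β : V →ₗ[K] V)
    (hbm : IsHomBimodule (fun x y => mul x y) (fun x => α x)
      (fun x v => l x v) (fun x v => r x v) (fun v => β v)) :
    ∀ n : ℕ, IsHomBimodule (fun x y => mul x y) (fun x => α x)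
      (fun x v => l ((α ^ n) x) v) (fun x v => r ((α ^ n) x) v)
      (fun v => β v) := by
  intro n
  obtain ⟨h1, h2, h3, h4, h5⟩ := hbm
  have hpm : ∀ x y, (α ^ n) (mul x y) = mul ((α ^ n) x) ((α ^ n) y) := by
    induction n with
    | zero => simp
    | succ m ih =>
      intro x y
      simp only [pow_succ, Module.End.mul_apply, hmult, ih]
  have hc : ∀ x, (α ^ n) (α x) = α ((α ^ n) x) := by
    intro x
    have : (α ^ n * α) x = (α * α ^ n) x := by
      rw [← pow_succ, ← pow_succ']
    simpa [Module.End.mul_apply] using this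
  refine ⟨fun x y v => ?_, fun x y v => ?_, fun x y v => ?_, fun x v => ?_, fun x v => ?_⟩
  · simp only [hpm, hc]; exact h1 _ _ v
  · simp only [hpm, hc]; exact h2 _ _ v
  · simp only [hc]; exact h3 _ _ v
  · simp only [hc]; exact h4 _ v
  · simp only [hc]; exact h5 _ v
end

section
/- Let (l, r, β, V) be a bimodule of a multiplicative Hom-associative algebra (A, ·, α) with α involutive (α² = Id) and β involutive. Define l*, r* : A → gl(V*) by ⟨l*(x)u*, v⟩ = ⟨u*, l(x)v⟩ and ⟨r*(x)u*, v⟩ = ⟨u*, r(x)v⟩. Then (r*, l*, β*, V*) is a bimodule of (A, ·, α). -/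
/-- if `(l, r, β, V)` is a bimodule of a multiplicative
Hom-associative algebra `(A, ·, α)` with `α` and `β` involutive, then
`(r*, l*, β*, V*)` is a bimodule of `(A, ·, α)`, where the dual maps are
given by `⟨l*(x)u*, v⟩ = ⟨u*, l(x)v⟩`, `⟨r*(x)u*, v⟩ = ⟨u*, r(x)v⟩`. -/
theorem stmt4 {K A V : Type*} [Field K] [AddCommGroup A] [Module K A]
    [AddCommGroup V] [Module K V]
    (mul : A →ₗ[K] A →ₗ[K] A) (α : A →ₗ[K] A)
    (hassoc : IsHomAssoc (fun x y => mul x y) (fun x => α x))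
    (hmult : ∀ x y, α (mul x y) = mul (α x) (α y))
    (l r : A →ₗ[K] Module.End K V) (β : V →ₗ[K] V)
    (hbm : IsHomBimodule (fun x y => mul x y) (fun x => α x)
      (fun x v => l x v) (fun x v => r x v) (fun v => β v))
    (hα : ∀ x, α (α x) = x) (hβ : ∀ v, β (β v) = v) :
    IsHomBimodule (W := Module.Dual K V)
      (fun x y => mul x y) (fun x => α x)
      (fun x u => (r x).dualMap u) (fun x u => (l x).dualMap u)
      (fun u => β.dualMap u) := by
  obtain ⟨h1, h2, h3, h4, h5⟩ := hbm
  simp only [] at h1 h2 h3 h4 h5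
  refine ⟨?_, ?_, ?_, ?_, ?_⟩
  · intro x y u
    ext v
    simp only [LinearMap.dualMap_apply', LinearMap.comp_apply]
    rw [h5, hmult, h2, hα]
  · intro x y u
    ext v
    simp only [LinearMap.dualMap_apply', LinearMap.comp_apply]
    rw [h4, hmult, h1, hα]
  · intro x y u
    ext v
    simp only [LinearMap.dualMap_apply', LinearMap.comp_apply]
    have := h3 (α y) (α x) v
    rw [hα, hα] at this
    rw [this]
  · intro x u
    ext v
    simp only [LinearMap.dualMap_apply', LinearMap.comp_apply]
    rw [h5, hα]
  · intro x u
    ext v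
    simp only [LinearMap.dualMap_apply', LinearMap.comp_apply]
    rw [h4, hα]
end

section
/- Let (A, ·, α) and (B, ∘, β) be Hom-associative algebras with linear maps l_A, r_A : A → gl(B) and l_B, r_B : B → gl(A) such that (l_A, r_A, β, B) is a bimodule of A and (l_B, r_B, α, A) is a bimodule of B. If the six matched-pair compatibility conditions hold, then the direct sum A ⊕ B is a Hom-associative algebra with product (x+a)∗(y+b) = (x·y + l_B(a)y + r_B(b)x) + (a∘b + l_A(x)b + r_A(y)a) and twisting map α ⊕ β. -/
/-- matched pairs of Hom-associative algebras give a
Hom-associative structure on the direct sum `A ⊕ B`. -/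
theorem stmt5 {K A B : Type*} [Field K] [AddCommGroup A] [Module K A]
    [AddCommGroup B] [Module K B]
    (mulA : A →ₗ[K] A →ₗ[K] A) (α : A →ₗ[K] A)
    (mulB : B →ₗ[K] B →ₗ[K] B) (β : B →ₗ[K] B)
    (hA : IsHomAssoc (fun x y => mulA x y) (fun x => α x))
    (hB : IsHomAssoc (fun a b => mulB a b) (fun a => β a))
    (lA rA : A →ₗ[K] Module.End K B) (lB rB : B →ₗ[K] Module.End K A)
    (hbmA : IsHomBimodule (fun x y => mulA x y) (fun x => α x)
      (fun x b => lA x b) (fun x b => rA x b) (fun b => β b))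
    (hbmB : IsHomBimodule (fun a b => mulB a b) (fun a => β a)
      (fun a x => lB a x) (fun a x => rB a x) (fun x => α x))
    (h1 : ∀ (x : A) (a b : B),
      lA (α x) (mulB a b) = lA (rB a x) (β b) + mulB (lA x a) (β b))
    (h2 : ∀ (x : A) (a b : B),
      rA (α x) (mulB a b) = rA (lB b x) (β a) + mulB (β a) (rA x b))
    (h3 : ∀ (a : B) (x y : A),
      lB (β a) (mulA x y) = lB (rA x a) (α y) + mulA (lB a x) (α y))
    (h4 : ∀ (a : B) (x y : A),
      rB (β a) (mulA x y) = rB (lA y a) (α x) + mulA (α x) (rB a y))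
    (h5 : ∀ (x : A) (a b : B),
      lA (lB a x) (β b) + mulB (rA x a) (β b)
        - rA (rB b x) (β a) - mulB (β a) (lA x b) = 0)
    (h6 : ∀ (a : B) (x y : A),
      lB (lA x a) (α y) + mulA (rB a x) (α y)
        - rB (rA y a) (α x) - mulA (α x) (lB a y) = 0) :
    IsHomAssoc
      (fun p q : A × B =>
        (mulA p.1 q.1 + lB p.2 q.1 + rB q.2 p.1,
         mulB p.2 q.2 + lA p.1 q.2 + rA q.1 p.2))
      (fun p : A × B => (α p.1, β p.2)) := by
  obtain ⟨hA1, hA2, hA3, hA4, hA5⟩ := hbmA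
  obtain ⟨hB1, hB2, hB3, hB4, hB5⟩ := hbmB
  have h5' : ∀ (x : A) (a b : B),
      lA (lB a x) (β b) + mulB (rA x a) (β b)
        = rA (rB b x) (β a) + mulB (β a) (lA x b) := by
    intro x a b
    have := h5 x a b
    rw [sub_sub, sub_eq_zero] at this
    exact this
  have h6' : ∀ (a : B) (x y : A),
      lB (lA x a) (α y) + mulA (rB a x) (α y)
        = rB (rA y a) (α x) + mulA (α x) (lB a y) := by
    intro a x y
    have := h6 a x y
    rw [sub_sub, sub_eq_zero] at this
    exact this
  simp only [IsHomAssoc] at hA hB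
  beta_reduce at hA hB hA1 hA2 hA3 hB1 hB2 hB3
  rintro ⟨x, a⟩ ⟨y, b⟩ ⟨z, c⟩
  refine Prod.ext ?_ ?_ <;> simp only [map_add, LinearMap.add_apply]
  · rw [hA x y z, h3 a y z, h4 c x y, hB1 a b z, hB2 b c x, hB3 a c y]
    have := h6' b x z
    -- lB (lA x b)(α z) + mulA (rB b x)(α z) = rB (rA z b)(α x) + mulA (α x)(lB b z)
    simp only [IsHomAssoc, IsHomBimodule] at *
    linear_combination (norm := abel) -this
  · rw [hB a b c, h1 x b c, h2 z a b, hA1 x y c, hA2 y z a, hA3 x z b]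
    have := h5' y a c
    simp only [IsHomAssoc, IsHomBimodule] at *
    linear_combination (norm := abel) -this
end

section
/- Let (A, ·, α) be a multiplicative Hom-associative algebra. Then the maps α⊗L and R⊗α on A⊗A, defined by (α⊗L)(x)(a⊗b) = α(a)⊗(x·b) and (R⊗α)(x)(a⊗b) = (a·x)⊗α(b), together with the twisting map α⊗α, form a bimodule (α⊗L, R⊗α, α⊗α, A⊗A) of A. -/
/-- for a multiplicative Hom-associative algebra `(A, ·, α)`,
`(α⊗L, R⊗α, α⊗α, A⊗A)` is a bimodule of `A`, where
`(α⊗L)(x)(a⊗b) = α(a)⊗(x·b)` and `(R⊗α)(x)(a⊗b) = (a·x)⊗α(b)`. -/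
theorem stmt6 {K A : Type*} [Field K] [AddCommGroup A] [Module K A]
    (mul : A →ₗ[K] A →ₗ[K] A) (α : A →ₗ[K] A)
    (hassoc : IsHomAssoc (fun x y => mul x y) (fun x => α x))
    (hmult : ∀ x y, α (mul x y) = mul (α x) (α y)) :
    IsHomBimodule (W := TensorProduct K A A)
      (fun x y => mul x y) (fun x => α x)
      (fun x t => TensorProduct.map α (mul x) t)
      (fun x t => TensorProduct.map (mul.flip x) α t)
      (fun t => TensorProduct.map α α t) := by
  refine ⟨?_, ?_, ?_, ?_, ?_⟩
  · intro x y v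
    induction v using TensorProduct.induction_on with
    | zero => simp
    | tmul a b => simp [hmult, hassoc x y b]
    | add u w hu hw => simp only [map_add, hu, hw]
  · intro x y v
    induction v using TensorProduct.induction_on with
    | zero => simp
    | tmul a b => simp [hmult, (hassoc a x y).symm]
    | add u w hu hw => simp only [map_add, hu, hw]
  · intro x y v
    induction v using TensorProduct.induction_on with
    | zero => simp
    | tmul a b => simp [hmult]
    | add u w hu hw => simp only [map_add, hu, hw]
  · intro x v
    induction v using TensorProduct.induction_on with
    | zero => simp
    | tmul a b => simp [hmult]
    | add u w hu hw => simp only [map_add, hu, hw]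
  · intro x v
    induction v using TensorProduct.induction_on with
    | zero => simp
    | tmul a b => simp [hmult]
    | add u w hu hw => simp only [map_add, hu, hw]
end

section
/- Let (A, ≺, ≻, α) be a multiplicative Hom-dendriform algebra and (A, ∗, α) its associated Hom-associative algebra with x ∗ y = x ≺ y + x ≻ y. Then (L_≻, R_≺, α, A), where L_≻(x)y = x ≻ y and R_≺(x)y = y ≺ x, is a bimodule of (A, ∗, α). -/
/-- The Hom-dendriform algebra axioms for `(prec, succ, α)`. -/
def IsHomDend {X : Type*} [Add X] (prec succ : X → X → X) (α : X → X) : Prop :=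
  (∀ x y z, prec (prec x y) (α z) = prec (α x) (prec y z + succ y z)) ∧
  (∀ x y z, prec (succ x y) (α z) = succ (α x) (prec y z)) ∧
  (∀ x y z, succ (α x) (succ y z) = succ (prec x y + succ x y) (α z))

/-- for a multiplicative Hom-dendriform algebra `(A, ≺, ≻, α)`
with associated Hom-associative algebra `(A, ∗, α)`, `(L_≻, R_≺, α, A)`
is a bimodule of `(A, ∗, α)`, where `L_≻(x)y = x ≻ y` and `R_≺(x)y = y ≺ x`. -/
theorem stmt8 {K A : Type*} [Field K] [AddCommGroup A] [Module K A]
    (prec succ : A →ₗ[K] A →ₗ[K] A) (α : A →ₗ[K] A)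
    (hdend : IsHomDend (fun x y => prec x y) (fun x y => succ x y)
      (fun x => α x))
    (hmultprec : ∀ x y, α (prec x y) = prec (α x) (α y))
    (hmultsucc : ∀ x y, α (succ x y) = succ (α x) (α y)) :
    IsHomBimodule (fun x y => prec x y + succ x y) (fun x => α x)
      (fun x y => succ x y) (fun x y => prec y x) (fun x => α x) := by
  obtain ⟨h1, h2, h3⟩ := hdend
  refine ⟨?_, ?_, ?_, ?_, ?_⟩
  · intro x y v; exact (h3 x y v).symm
  · intro x y v; exact (h1 v x y).symm
  · intro x y v; exact (h2 x v y).symm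
  · intro x v; exact hmultsucc x v
  · intro x v; exact hmultprec v x
end

section
/- Let (A, ·, α) be a Hom-associative algebra, (l, r, β, V) a bimodule, and T : V → A an O-operator associated to (l, r, β, V). Then defining u ≻ v = l(T(u))v and u ≺ v = r(T(v))u makes (V, ≺, ≻, β) a Hom-dendriform algebra. -/
/-- an O-operator `T : V → A` associated to a bimodule
`(l, r, β, V)` of a Hom-associative algebra `(A, ·, α)` induces a
Hom-dendriform structure `u ≻ v = l(T(u))v`, `u ≺ v = r(T(v))u` on `(V, β)`. -/
theorem stmt9 {K A V : Type*} [Field K] [AddCommGroup A] [Module K A]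
    [AddCommGroup V] [Module K V]
    (mul : A →ₗ[K] A →ₗ[K] A) (α : A →ₗ[K] A)
    (hassoc : IsHomAssoc (fun x y => mul x y) (fun x => α x))
    (l r : A →ₗ[K] Module.End K V) (β : V →ₗ[K] V)
    (hbm : IsHomBimodule (fun x y => mul x y) (fun x => α x)
      (fun x v => l x v) (fun x v => r x v) (fun v => β v))
    (T : V →ₗ[K] A)
    (hT1 : ∀ v, α (T v) = T (β v))
    (hT2 : ∀ u v, mul (T u) (T v) = T (l (T u) v + r (T v) u)) :
    IsHomDend (fun u v => r (T v) u) (fun u v => l (T u) v)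
      (fun v => β v) := by
  obtain ⟨hl, hr, hlr, hβl, hβr⟩ := hbm
  refine ⟨fun x y z => ?_, fun x y z => ?_, fun x y z => ?_⟩
  · have h := hr (T y) (T z) x
    simp only at h ⊢
    rw [hT1] at h
    rw [← h, hT2, add_comm]
  · have h := hlr (T x) (T z) y
    simp only at h ⊢
    rw [hT1, hT1] at h
    exact h.symm
  · have h := hl (T x) (T y) z
    simp only at h ⊢
    rw [hT1] at h
    rw [← h, hT2, add_comm]
end

section
/- Let (A, ·, α) be a multiplicative Hom-associative algebra. A Rota–Baxter operator of weight zero on A, i.e. a linear map f commuting with α satisfying f(x)·f(y) = f(f(x)·y + x·f(y)), induces a Hom-dendriform algebra structure on A via x ≻ y = f(x)·y and x ≺ y = x·f(y). -/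
/-- a Rota–Baxter operator of weight zero on a multiplicative
Hom-associative algebra `(A, ·, α)` induces a Hom-dendriform structure
`x ≻ y = f(x)·y`, `x ≺ y = x·f(y)` on `A`. -/
theorem stmt10 {K A : Type*} [Field K] [AddCommGroup A] [Module K A]
    (mul : A →ₗ[K] A →ₗ[K] A) (α : A →ₗ[K] A)
    (hassoc : IsHomAssoc (fun x y => mul x y) (fun x => α x))
    (hmult : ∀ x y, α (mul x y) = mul (α x) (α y))
    (f : A →ₗ[K] A)
    (hfα : ∀ x, f (α x) = α (f x))
    (hRB : ∀ x y, mul (f x) (f y) = f (mul (f x) y + mul x (f y))) :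
    IsHomDend (fun x y => mul x (f y)) (fun x y => mul (f x) y)
      (fun x => α x) := by
  refine ⟨fun x y z => ?_, fun x y z => ?_, fun x y z => ?_⟩ <;> simp only
  · calc mul (mul x (f y)) (f (α z))
        = mul (mul x (f y)) (α (f z)) := by rw [hfα]
      _ = mul (α x) (mul (f y) (f z)) := (hassoc x (f y) (f z)).symm
      _ = mul (α x) (f (mul (f y) z + mul y (f z))) := by rw [hRB]
      _ = mul (α x) (f (mul y (f z) + mul (f y) z)) := by rw [add_comm]
  · calc mul (mul (f x) y) (f (α z))
        = mul (mul (f x) y) (α (f z)) := by rw [hfα]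
      _ = mul (α (f x)) (mul y (f z)) := (hassoc (f x) y (f z)).symm
      _ = mul (f (α x)) (mul y (f z)) := by rw [hfα]
  · calc mul (f (α x)) (mul (f y) z)
        = mul (α (f x)) (mul (f y) z) := by rw [hfα]
      _ = mul (mul (f x) (f y)) (α z) := hassoc (f x) (f y) z
      _ = mul (f (mul (f x) y + mul x (f y))) (α z) := by rw [hRB]
      _ = mul (f (mul x (f y) + mul (f x) y)) (α z) := by rw [add_comm]
end

section
/- Let (A, ∗, α) be a multiplicative Hom-associative algebra. There exists a compatible multiplicative Hom-dendriform algebra structure on A if and only if there exists an invertible O-operator of (A, ∗, α) associated to some bimodule. -/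
universe u

/-- a multiplicative Hom-associative algebra `(A, ∗, α)` admits
a compatible multiplicative Hom-dendriform structure iff it admits an
invertible O-operator associated to some bimodule. -/
theorem stmt11 {K : Type*} [Field K] {A : Type u} [AddCommGroup A] [Module K A]
    (mul : A →ₗ[K] A →ₗ[K] A) (α : A →ₗ[K] A)
    (hassoc : IsHomAssoc (fun x y => mul x y) (fun x => α x))
    (hmult : ∀ x y, α (mul x y) = mul (α x) (α y)) :
    (∃ prec succ : A →ₗ[K] A →ₗ[K] A,
      IsHomDend (fun x y => prec x y) (fun x y => succ x y) (fun x => α x) ∧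
      (∀ x y, α (prec x y) = prec (α x) (α y)) ∧
      (∀ x y, α (succ x y) = succ (α x) (α y)) ∧
      (∀ x y, mul x y = prec x y + succ x y)) ↔
    (∃ (V : Type u) (_ : AddCommGroup V) (_ : Module K V)
      (l r : A →ₗ[K] Module.End K V) (β : V →ₗ[K] V) (T : V ≃ₗ[K] A),
      IsHomBimodule (fun x y => mul x y) (fun x => α x)
        (fun x w => l x w) (fun x w => r x w) (fun w => β w) ∧
      (∀ w, α (T w) = T (β w)) ∧
      (∀ u w, mul (T u) (T w) = T (l (T u) w + r (T w) u))) := by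
  constructor
  · rintro ⟨prec, succ, ⟨hd1, hd2, hd3⟩, hp, hs, hcomp⟩
    refine ⟨A, inferInstance, inferInstance, succ, prec.flip, α,
      LinearEquiv.refl K A, ⟨?_, ?_, ?_, ?_, ?_⟩, ?_, ?_⟩
    · intro x y v
      simp only [hcomp x y]
      exact (hd3 x y v).symm
    · intro x y v
      simp only [LinearMap.flip_apply, hcomp x y]
      exact (hd1 v x y).symm
    · intro x y v
      simp only [LinearMap.flip_apply]
      exact (hd2 x v y).symm
    · intro x v
      exact hs x v
    · intro x v
      exact hp v x
    · intro w; rfl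
    · intro u w
      simp only [LinearEquiv.refl_apply, LinearMap.flip_apply, map_add,
        LinearMap.add_apply, hcomp u w]
      abel
  · rintro ⟨V, _, _, l, r, β, T, ⟨hb1, hb2, hb3, hb4, hb5⟩, hT, hO⟩
    have hβs : ∀ y : A, β (T.symm y) = T.symm (α y) := by
      intro y
      apply T.injective
      rw [← hT, T.apply_symm_apply, T.apply_symm_apply]
    set succ : A →ₗ[K] A →ₗ[K] A :=
      LinearMap.mk₂ K (fun x y => T (l x (T.symm y)))
        (by intro x x' y; simp [map_add])
        (by intro c x y; simp [map_smul])
        (by intro x y y'; simp [map_add])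
        (by intro c x y; simp [map_smul]) with hsucc
    set prec : A →ₗ[K] A →ₗ[K] A :=
      LinearMap.mk₂ K (fun x y => T (r y (T.symm x)))
        (by intro x x' y; simp [map_add])
        (by intro c x y; simp [map_smul])
        (by intro x y y'; simp [map_add])
        (by intro c x y; simp [map_smul]) with hprec
    have hb1' : ∀ x y v, l (mul x y) (β v) = l (α x) (l y v) := hb1
    have hb2' : ∀ x y v, r (mul x y) (β v) = r (α y) (r x v) := hb2
    have hb3' : ∀ x y v, l (α x) (r y v) = r (α y) (l x v) := hb3
    have hb4' : ∀ x v, β (l x v) = l (α x) (β v) := hb4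
    have hb5' : ∀ x v, β (r x v) = r (α x) (β v) := hb5
    have hmul' : ∀ x y : A, T (r y (T.symm x) + l x (T.symm y)) = mul x y := by
      intro x y
      have := hO (T.symm x) (T.symm y)
      rw [T.apply_symm_apply, T.apply_symm_apply] at this
      rw [add_comm, ← this]
    refine ⟨prec, succ, ⟨?_, ?_, ?_⟩, ?_, ?_, ?_⟩
    · intro x y z
      simp only [hprec, hsucc, LinearMap.mk₂_apply, T.symm_apply_apply]
      rw [← map_add T, hmul' y z, ← hβs, hb2' y z (T.symm x)]
    · intro x y z
      simp only [hprec, hsucc, LinearMap.mk₂_apply, T.symm_apply_apply]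
      congr 1
      exact (hb3' x z (T.symm y)).symm
    · intro x y z
      simp only [hprec, hsucc, LinearMap.mk₂_apply, T.symm_apply_apply]
      rw [← map_add T, hmul' x y, ← hβs, hb1' x y (T.symm z)]
    · intro x y
      simp only [hprec, LinearMap.mk₂_apply]
      rw [hT]
      congr 1
      rw [hb5' y (T.symm x), hβs]
    · intro x y
      simp only [hsucc, LinearMap.mk₂_apply]
      rw [hT]
      congr 1
      rw [hb4' x (T.symm y), hβs]
    · intro x y
      simp only [hprec, hsucc, LinearMap.mk₂_apply]
      have := hO (T.symm x) (T.symm y)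
      rw [T.apply_symm_apply, T.apply_symm_apply] at this
      rw [this, map_add, add_comm]
end

section
/- A biHom-dendriform algebra (A, ≺, ≻, α, β) yields a biHom-associative algebra (A, ∗, α, β) where x ∗ y = x ≺ y + x ≻ y. -/
/-- The biHom-dendriform identities for `(prec, succ, α, β)`. -/
def IsBiHomDend {X : Type*} [Add X] (prec succ : X → X → X)
    (α β : X → X) : Prop :=
  (∀ x y z, prec (prec x y) (β z) = prec (α x) (prec y z + succ y z)) ∧
  (∀ x y z, prec (succ x y) (β z) = succ (α x) (prec y z)) ∧
  (∀ x y z, succ (α x) (succ y z) = succ (prec x y + succ x y) (β z))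

/-- a biHom-dendriform algebra `(A, ≺, ≻, α, β)` yields a
biHom-associative algebra `(A, ∗, α, β)` with `x ∗ y = x ≺ y + x ≻ y`:
`α` and `β` are multiplicative for `∗` and
`α(x) ∗ (y ∗ z) = (x ∗ y) ∗ β(z)`. -/
theorem stmt13 {K A : Type*} [Field K] [AddCommGroup A] [Module K A]
    (prec succ : A →ₗ[K] A →ₗ[K] A) (α β : A →ₗ[K] A)
    (hcomm : ∀ x, α (β x) = β (α x))
    (hαp : ∀ x y, α (prec x y) = prec (α x) (α y))
    (hαs : ∀ x y, α (succ x y) = succ (α x) (α y))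
    (hβp : ∀ x y, β (prec x y) = prec (β x) (β y))
    (hβs : ∀ x y, β (succ x y) = succ (β x) (β y))
    (hdend : IsBiHomDend (fun x y => prec x y) (fun x y => succ x y)
      (fun x => α x) (fun x => β x)) :
    (∀ x y, α (prec x y + succ x y) = prec (α x) (α y) + succ (α x) (α y)) ∧
    (∀ x y, β (prec x y + succ x y) = prec (β x) (β y) + succ (β x) (β y)) ∧
    (∀ x y z,
      prec (α x) (prec y z + succ y z) + succ (α x) (prec y z + succ y z) =
      prec (prec x y + succ x y) (β z) + succ (prec x y + succ x y) (β z)) := by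
  obtain ⟨h1, h2, h3⟩ := hdend
  refine ⟨fun x y => by simp [map_add, hαp, hαs],
    fun x y => by simp [map_add, hβp, hβs], fun x y z => ?_⟩
  have e1 := h1 x y z
  have e2 := h2 x y z
  have e3 := h3 x y z
  simp only at e1 e2 e3
  simp only [map_add, LinearMap.add_apply] at e1 e3 ⊢
  rw [← e1, ← e2, e3]
  abel
end

section
/- Let (l, r, β₁, β₂, V) be a bimodule of a multiplicative biHom-associative algebra (A, ·, α₁, α₂). Then for any nonnegative integer n, (l∘α₁ⁿ, r∘α₂ⁿ, β₁, β₂, V) is also a bimodule of A. -/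
/-- Bimodule of a biHom-associative algebra `(A, ·, α₁, α₂)` on `(V, β₁, β₂)`. -/
def IsBiHomBimodule {X W : Type*} (mul : X → X → X) (α₁ α₂ : X → X)
    (l r : X → W → W) (β₁ β₂ : W → W) : Prop :=
  (∀ x y v, l (mul x y) (β₁ v) = l (α₂ x) (l y v)) ∧
  (∀ x y v, r (mul x y) (β₂ v) = r (α₁ y) (r x v)) ∧
  (∀ x y v, l (α₂ x) (r y v) = r (α₁ y) (l x v)) ∧
  (∀ x v, β₁ (l x v) = l (α₁ x) (β₁ v)) ∧
  (∀ x v, β₁ (r x v) = r (α₁ x) (β₁ v)) ∧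
  (∀ x v, β₂ (l x v) = l (α₂ x) (β₂ v)) ∧
  (∀ x v, β₂ (r x v) = r (α₂ x) (β₂ v))

/-- if `(l, r, β₁, β₂, V)` is a bimodule of a multiplicative
biHom-associative algebra `(A, ·, α₁, α₂)`, then so is
`(l∘α₁ⁿ, r∘α₂ⁿ, β₁, β₂, V)` for every nonnegative integer `n`. -/
theorem stmt17 {K A V : Type*} [Field K] [AddCommGroup A] [Module K A]
    [AddCommGroup V] [Module K V]
    (mul : A →ₗ[K] A →ₗ[K] A) (α₁ α₂ : Module.End K A)
    (hcomm : ∀ x, α₁ (α₂ x) = α₂ (α₁ x))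
    (hm1 : ∀ x y, α₁ (mul x y) = mul (α₁ x) (α₁ y))
    (hm2 : ∀ x y, α₂ (mul x y) = mul (α₂ x) (α₂ y))
    (hassoc : ∀ x y z, mul (α₁ x) (mul y z) = mul (mul x y) (α₂ z))
    (l r : A →ₗ[K] Module.End K V) (β₁ β₂ : V →ₗ[K] V)
    (hbm : IsBiHomBimodule (fun x y => mul x y) (fun x => α₁ x)
      (fun x => α₂ x) (fun x v => l x v) (fun x v => r x v)
      (fun v => β₁ v) (fun v => β₂ v)) :
    ∀ n : ℕ, IsBiHomBimodule (fun x y => mul x y) (fun x => α₁ x)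
      (fun x => α₂ x)
      (fun x v => l ((α₁ ^ n) x) v) (fun x v => r ((α₂ ^ n) x) v)
      (fun v => β₁ v) (fun v => β₂ v) := by
  obtain ⟨h1, h2, h3, h4, h5, h6, h7⟩ := hbm
  simp only [] at h1 h2 h3 h4 h5 h6 h7 ⊢
  have p1 : ∀ (n : ℕ) x y, (α₁ ^ n) (mul x y) = mul ((α₁ ^ n) x) ((α₁ ^ n) y) := by
    intro n
    induction n with
    | zero => intro x y; simp
    | succ k ih => intro x y; simp only [pow_succ, Module.End.mul_apply, ih, hm1]
  have p2 : ∀ (n : ℕ) x y, (α₂ ^ n) (mul x y) = mul ((α₂ ^ n) x) ((α₂ ^ n) y) := by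
    intro n
    induction n with
    | zero => intro x y; simp
    | succ k ih => intro x y; simp only [pow_succ, Module.End.mul_apply, ih, hm2]
  have c12 : ∀ (n : ℕ) x, α₂ ((α₁ ^ n) x) = (α₁ ^ n) (α₂ x) := by
    intro n
    induction n with
    | zero => intro x; simp
    | succ k ih => intro x; simp only [pow_succ, Module.End.mul_apply]; rw [ih, hcomm]
  have c21 : ∀ (n : ℕ) x, α₁ ((α₂ ^ n) x) = (α₂ ^ n) (α₁ x) := by
    intro n
    induction n with
    | zero => intro x; simp
    | succ k ih => intro x; simp only [pow_succ, Module.End.mul_apply]; rw [ih, ← hcomm]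
  have c11 : ∀ (n : ℕ) x, α₁ ((α₁ ^ n) x) = (α₁ ^ n) (α₁ x) := by
    intro n x
    simpa using LinearMap.congr_fun
      (show α₁ * α₁ ^ n = α₁ ^ n * α₁ by rw [← pow_succ, ← pow_succ']) x
  have c22 : ∀ (n : ℕ) x, α₂ ((α₂ ^ n) x) = (α₂ ^ n) (α₂ x) := by
    intro n x
    simpa using LinearMap.congr_fun
      (show α₂ * α₂ ^ n = α₂ ^ n * α₂ by rw [← pow_succ, ← pow_succ']) x
  intro n
  refine ⟨?_, ?_, ?_, ?_, ?_, ?_, ?_⟩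
  · intro x y v; dsimp only; rw [p1, h1, c12]
  · intro x y v; dsimp only; rw [p2, h2, c21]
  · intro x y v; dsimp only; rw [← c12, h3, c21]
  · intro x v; dsimp only; rw [h4, c11]
  · intro x v; dsimp only; rw [h5, c21]
  · intro x v; dsimp only; rw [h6, c12]
  · intro x v; dsimp only; rw [h7, c22]
end

section
/- Let (l₊, r₊, l₋, r₋, β, V) be a bimodule of a Hom-dendriform algebra (A, ≻, ≺, α). Then the direct sum A ⊕ V carries a Hom-dendriform algebra structure given by (x+u) ≻ (y+v) = x≻y + l₊(x)v + r₊(y)u and (x+u) ≺ (y+v) = x≺y + l₋(x)v + r₋(y)u, with twisting map α ⊕ β. -/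
/-- Bimodule `(l_≻, r_≻, l_≺, r_≺, β, V)` of a Hom-dendriform algebra
`(A, ≻, ≺, α)` (with `x∗y = x≻y + x≺y`, `l_∗ = l_≻ + l_≺`, `r_∗ = r_≻ + r_≺`). -/
def IsHomDendBimodule {X W : Type*} [Add X] [Add W]
    (prec succ : X → X → X) (α : X → X)
    (ls rs lp rp : X → W → W) (β : W → W) : Prop :=
  (∀ x y v, lp (prec x y) (β v) = lp (α x) (ls y v + lp y v)) ∧
  (∀ x y v, rp (α x) (lp y v) = lp (α y) (rs x v + rp x v)) ∧
  (∀ x y v, rp (α y) (rp x v) = rp (prec x y + succ x y) (β v)) ∧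
  (∀ x y v, lp (succ x y) (β v) = ls (α x) (lp y v)) ∧
  (∀ x y v, rp (α x) (ls y v) = ls (α y) (rp x v)) ∧
  (∀ x y v, rp (α x) (rs y v) = rs (prec y x) (β v)) ∧
  (∀ x y v, ls (prec x y + succ x y) (β v) = ls (α x) (ls y v)) ∧
  (∀ x y v, rs (α x) (ls y v + lp y v) = ls (α y) (rs x v)) ∧
  (∀ x y v, rs (α x) (rs y v + rp y v) = rs (succ y x) (β v)) ∧
  (∀ x v, β (ls x v) = ls (α x) (β v)) ∧
  (∀ x v, β (lp x v) = lp (α x) (β v)) ∧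
  (∀ x v, β (rs x v) = rs (α x) (β v)) ∧
  (∀ x v, β (rp x v) = rp (α x) (β v))

/-- a bimodule of a Hom-dendriform algebra yields a
Hom-dendriform structure on the direct sum `A ⊕ V`. -/
theorem stmt18 {K A V : Type*} [Field K] [AddCommGroup A] [Module K A]
    [AddCommGroup V] [Module K V]
    (prec succ : A →ₗ[K] A →ₗ[K] A) (α : A →ₗ[K] A)
    (hdend : IsHomDend (fun x y => prec x y) (fun x y => succ x y)
      (fun x => α x))
    (ls rs lp rp : A →ₗ[K] Module.End K V) (β : V →ₗ[K] V)
    (hbm : IsHomDendBimodule (fun x y => prec x y) (fun x y => succ x y)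
      (fun x => α x) (fun x v => ls x v) (fun x v => rs x v)
      (fun x v => lp x v) (fun x v => rp x v) (fun v => β v)) :
    IsHomDend
      (fun p q : A × V => (prec p.1 q.1, lp p.1 q.2 + rp q.1 p.2))
      (fun p q : A × V => (succ p.1 q.1, ls p.1 q.2 + rs q.1 p.2))
      (fun p : A × V => (α p.1, β p.2)) := by
  obtain ⟨d1, d2, d3⟩ := hdend
  obtain ⟨b1, b2, b3, b4, b5, b6, b7, b8, b9, c1, c2, c3, c4⟩ := hbm
  refine ⟨fun x y z => ?_, fun x y z => ?_, fun x y z => ?_⟩ <;>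
    refine Prod.ext ?_ ?_ <;>
    simp only [Prod.mk_add_mk, Prod.fst_add, Prod.snd_add, map_add,
      LinearMap.add_apply]
  · have := d1 x.1 y.1 z.1; simpa [map_add, LinearMap.add_apply] using this
  · have h1 := b1 x.1 y.1 z.2
    have h2 := b2 z.1 x.1 y.2
    have h3 := b3 y.1 z.1 x.2
    simp only [map_add, LinearMap.add_apply] at h1 h2 h3 ⊢
    rw [h1, h2, h3]; abel
  · exact d2 x.1 y.1 z.1
  · have h1 := b4 x.1 y.1 z.2
    have h2 := b5 z.1 x.1 y.2
    have h3 := b6 z.1 y.1 x.2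
    simp only [map_add, LinearMap.add_apply] at h1 h2 h3 ⊢
    rw [h1, h2, h3]; abel
  · have := d3 x.1 y.1 z.1; simpa [map_add, LinearMap.add_apply] using this
  · have h1 := b7 x.1 y.1 z.2
    have h2 := b8 z.1 x.1 y.2
    have h3 := b9 z.1 y.1 x.2
    simp only [map_add, LinearMap.add_apply] at h1 h2 h3 ⊢
    rw [h1, ← h2, ← h3]; abel
end

section
/- Let (l_≻, r_≻, l_≺, r_≺, β, V) be a bimodule of a Hom-dendriform algebra (A, ≻, ≺, α), and let (A, ∗, α) be its associated Hom-associative algebra with x∗y = x≻y + x≺y. Then both (l_≻, r_≺, β, V) and (l_≻ + l_≺, r_≻ + r_≺, β, V) are bimodules of the Hom-associative algebra (A, ∗, α). -/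
/-- for a bimodule `(l_≻, r_≻, l_≺, r_≺, β, V)` of a
Hom-dendriform algebra `(A, ≻, ≺, α)` with associated Hom-associative
algebra `(A, ∗, α)`, both `(l_≻, r_≺, β, V)` and
`(l_≻ + l_≺, r_≻ + r_≺, β, V)` are bimodules of `(A, ∗, α)`. -/
theorem stmt19 {K A V : Type*} [Field K] [AddCommGroup A] [Module K A]
    [AddCommGroup V] [Module K V]
    (prec succ : A →ₗ[K] A →ₗ[K] A) (α : A →ₗ[K] A)
    (hdend : IsHomDend (fun x y => prec x y) (fun x y => succ x y)
      (fun x => α x))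
    (ls rs lp rp : A →ₗ[K] Module.End K V) (β : V →ₗ[K] V)
    (hbm : IsHomDendBimodule (fun x y => prec x y) (fun x y => succ x y)
      (fun x => α x) (fun x v => ls x v) (fun x v => rs x v)
      (fun x v => lp x v) (fun x v => rp x v) (fun v => β v)) :
    IsHomBimodule (fun x y => prec x y + succ x y) (fun x => α x)
      (fun x v => ls x v) (fun x v => rp x v) (fun v => β v) ∧
    IsHomBimodule (fun x y => prec x y + succ x y) (fun x => α x)
      (fun x v => ls x v + lp x v) (fun x v => rs x v + rp x v)
      (fun v => β v) := by
  obtain ⟨h1,h2,h3,h4,h5,h6,h7,h8,h9,h10,h11,h12,h13⟩ := hbm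
  replace h1 : ∀ x y v, lp (prec x y) (β v) = lp (α x) (ls y v + lp y v) := h1
  replace h2 : ∀ x y v, rp (α x) (lp y v) = lp (α y) (rs x v + rp x v) := h2
  replace h3 : ∀ x y v, rp (α y) (rp x v) = rp (prec x y + succ x y) (β v) := h3
  replace h4 : ∀ x y v, lp (succ x y) (β v) = ls (α x) (lp y v) := h4
  replace h5 : ∀ x y v, rp (α x) (ls y v) = ls (α y) (rp x v) := h5
  replace h6 : ∀ x y v, rp (α x) (rs y v) = rs (prec y x) (β v) := h6
  replace h7 : ∀ x y v, ls (prec x y + succ x y) (β v) = ls (α x) (ls y v) := h7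
  replace h8 : ∀ x y v, rs (α x) (ls y v + lp y v) = ls (α y) (rs x v) := h8
  replace h9 : ∀ x y v, rs (α x) (rs y v + rp y v) = rs (succ y x) (β v) := h9
  replace h10 : ∀ x v, β (ls x v) = ls (α x) (β v) := h10
  replace h11 : ∀ x v, β (lp x v) = lp (α x) (β v) := h11
  replace h12 : ∀ x v, β (rs x v) = rs (α x) (β v) := h12
  replace h13 : ∀ x v, β (rp x v) = rp (α x) (β v) := h13
  refine ⟨⟨fun x y v => h7 x y v, fun x y v => (h3 x y v).symm,
    fun x y v => (h5 y x v).symm, h10, h13⟩, ?_, ?_, ?_, ?_, ?_⟩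
  · intro x y v
    show ls (prec x y + succ x y) (β v) + lp (prec x y + succ x y) (β v)
        = ls (α x) (ls y v + lp y v) + lp (α x) (ls y v + lp y v)
    have e1 : lp (prec x y + succ x y) (β v)
        = lp (prec x y) (β v) + lp (succ x y) (β v) := by simp [map_add]
    rw [h7, e1, h1 x y v, h4 x y v, map_add (ls (α x)), map_add (lp (α x))]
    abel
  · intro x y v
    show rs (prec x y + succ x y) (β v) + rp (prec x y + succ x y) (β v)
        = rs (α y) (rs x v + rp x v) + rp (α y) (rs x v + rp x v)
    have e1 : rs (prec x y + succ x y) (β v)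
        = rs (prec x y) (β v) + rs (succ x y) (β v) := by simp [map_add]
    rw [e1, h9 y x v, map_add (rp (α y)), h6 y x v, h3 x y v]
    abel
  · intro x y v
    show ls (α x) (rs y v + rp y v) + lp (α x) (rs y v + rp y v)
        = rs (α y) (ls x v + lp x v) + rp (α y) (ls x v + lp x v)
    rw [h8 y x v, map_add (rp (α y)), h5 y x v, h2 y x v,
        map_add (ls (α x))]
    abel
  · intro x v
    show β (ls x v + lp x v) = ls (α x) (β v) + lp (α x) (β v)
    rw [map_add, h10, h11]
  · intro x v
    show β (rs x v + rp x v) = rs (α x) (β v) + rp (α x) (β v)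
    rw [map_add, h12, h13]
end
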